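/- arXiv:2602.08905 — 2 statements merged into one kernel-verified Lean document; each statement's English description precedes it below -/
import Mathlib

section
/- Let (Ω, μ) be a probability space and X : Ω → ℝ a measurable random variable with |X| ≤ K almost everywhere for some constant K > 0. Then the bias of the exponential transformation satisfies |E[exp(X)] − exp(E[X])| ≤ (exp(K) / 2) · Var[X]. -/
open MeasureTheory ProbabilityTheory

lemma exp_sub_one_le (s : ℝ) : Real.exp s - 1 ≤ s * Real.exp s := by
  have h1 := Real.add_one_le_exp (-s)
  have h2 : Real.exp (-s) * Real.exp s = 1 := by
    rw [← Real.exp_add]; simp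
  nlinarith [Real.exp_pos s]

lemma exp_taylor_bound (t : ℝ) :
    Real.exp t - 1 - t ≤ t ^ 2 / 2 * Real.exp (max t 0) := by
  have key : Real.exp t - 1 - t = ∫ s in (0:ℝ)..t, (Real.exp s - 1) := by
    rw [intervalIntegral.integral_sub (Real.continuous_exp.intervalIntegrable 0 t)
      (intervalIntegrable_const), integral_exp, intervalIntegral.integral_const]
    simp
  rcases le_or_gt 0 t with ht | ht
  · have hmax : max t 0 = t := max_eq_left ht
    rw [key, hmax]
    have : ∫ s in (0:ℝ)..t, (Real.exp s - 1) ≤ ∫ s in (0:ℝ)..t, s * Real.exp t := by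
      apply intervalIntegral.integral_mono_on ht
        ((Real.continuous_exp.sub continuous_const).intervalIntegrable 0 t)
        ((continuous_id.mul continuous_const).intervalIntegrable 0 t)
      intro s hs
      calc Real.exp s - 1 ≤ s * Real.exp s := exp_sub_one_le s
        _ ≤ s * Real.exp t := by
            apply mul_le_mul_of_nonneg_left (Real.exp_le_exp.2 hs.2) hs.1
    calc (∫ s in (0:ℝ)..t, (Real.exp s - 1)) ≤ ∫ s in (0:ℝ)..t, s * Real.exp t := this
      _ = t ^ 2 / 2 * Real.exp t := by
          rw [intervalIntegral.integral_mul_const, integral_id]; ring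
  · have hmax : max t 0 = 0 := max_eq_right ht.le
    rw [key, hmax, Real.exp_zero, mul_one,
      intervalIntegral.integral_symm t 0]
    have : ∫ s in t..(0:ℝ), (Real.exp s - 1) ≥ ∫ s in t..(0:ℝ), s := by
      apply intervalIntegral.integral_mono_on ht.le
        (continuous_id.intervalIntegrable t 0)
        ((Real.continuous_exp.sub continuous_const).intervalIntegrable t 0)
      intro s _
      have := Real.add_one_le_exp s
      simp only [id_eq, Pi.sub_apply]; linarith
    rw [integral_id] at this
    nlinarith [this]

lemma pointwise_bound {K a b : ℝ} (ha : |a| ≤ K) (hb : |b| ≤ K) :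
    |Real.exp a - Real.exp b - Real.exp b * (a - b)| ≤ Real.exp K / 2 * (a - b) ^ 2 := by
  have hid : Real.exp a - Real.exp b - Real.exp b * (a - b)
      = Real.exp b * (Real.exp (a - b) - 1 - (a - b)) := by
    have h : Real.exp a = Real.exp b * Real.exp (a - b) := by
      rw [← Real.exp_add]; ring_nf
    rw [h]; ring
  have hnn : 0 ≤ Real.exp (a - b) - 1 - (a - b) := by
    nlinarith [Real.add_one_le_exp (a - b)]
  have hub := exp_taylor_bound (a - b)
  rw [hid, abs_of_nonneg (by positivity)]
  have hmax : b + max (a - b) 0 ≤ K := by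
    rcases le_total (a - b) 0 with h | h
    · rw [max_eq_right h]; simpa using (abs_le.1 hb).2
    · rw [max_eq_left h]; have := (abs_le.1 ha).2; linarith
  calc Real.exp b * (Real.exp (a - b) - 1 - (a - b))
      ≤ Real.exp b * ((a - b) ^ 2 / 2 * Real.exp (max (a - b) 0)) := by
        apply mul_le_mul_of_nonneg_left hub (Real.exp_pos b).le
    _ = (a - b) ^ 2 / 2 * Real.exp (b + max (a - b) 0) := by
        rw [Real.exp_add]; ring
    _ ≤ Real.exp K / 2 * (a - b) ^ 2 := by
        have := Real.exp_le_exp.2 hmax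
        nlinarith [sq_nonneg (a - b), Real.exp_pos (b + max (a - b) 0)]

/-- **Bias of the exponential transformation** (Lemma 1, bias part).
If `X` is a measurable random variable on a probability space with `|X| ≤ K`
almost everywhere for some `K > 0`, then
`|E[exp X] − exp (E[X])| ≤ (exp K / 2) · Var[X]`. -/
theorem exp_bias_le_variance
    {Ω : Type*} [MeasurableSpace Ω] (μ : Measure Ω) [IsProbabilityMeasure μ]
    (X : Ω → ℝ) (hX : Measurable X)
    (K : ℝ) (hK : 0 < K) (hbound : ∀ᵐ ω ∂μ, |X ω| ≤ K) :
    |(∫ ω, Real.exp (X ω) ∂μ) - Real.exp (∫ ω, X ω ∂μ)| ≤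
      (Real.exp K / 2) * variance X μ := by
  have hXnorm : ∀ᵐ ω ∂μ, ‖X ω‖ ≤ K := by simpa [Real.norm_eq_abs] using hbound
  have hXint : Integrable X μ :=
    ⟨hX.aestronglyMeasurable, HasFiniteIntegral.of_bounded hXnorm⟩
  set m : ℝ := ∫ ω, X ω ∂μ with hm
  have hmK : |m| ≤ K := by
    calc |m| = ‖∫ ω, X ω ∂μ‖ := rfl
      _ ≤ K * (μ Set.univ).toReal := norm_integral_le_of_norm_le_const hXnorm
      _ = K := by simp
  have hX2 : MemLp X 2 μ := MemLp.of_bound hX.aestronglyMeasurable K hXnorm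
  have hvar : variance X μ = ∫ ω, (X ω - m) ^ 2 ∂μ := by
    rw [variance_eq_integral hX.aemeasurable]
  -- integrability of pieces
  have hexpint : Integrable (fun ω => Real.exp (X ω)) μ := by
    refine ⟨(Real.continuous_exp.measurable.comp hX).aestronglyMeasurable,
      HasFiniteIntegral.of_bounded (C := Real.exp K) ?_⟩
    filter_upwards [hbound] with ω h
    rw [Real.norm_eq_abs, abs_of_nonneg (Real.exp_pos _).le]
    exact Real.exp_le_exp.2 (abs_le.1 h).2
  have hsqint : Integrable (fun ω => (X ω - m) ^ 2) μ := by
    have := (hX2.sub (memLp_const m)).integrable_sq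
    simpa using this
  have h1 : Integrable (fun ω => Real.exp (X ω) - Real.exp m) μ :=
    hexpint.sub (integrable_const _)
  have h3 : Integrable (fun ω => X ω - m) μ := hXint.sub (integrable_const m)
  have h2 : Integrable (fun ω => Real.exp m * (X ω - m)) μ := h3.const_mul _
  have hgint : Integrable
      (fun ω => Real.exp (X ω) - Real.exp m - Real.exp m * (X ω - m)) μ :=
    h1.sub h2
  have hInt : (∫ ω, Real.exp (X ω) ∂μ) - Real.exp m
      = ∫ ω, (Real.exp (X ω) - Real.exp m - Real.exp m * (X ω - m)) ∂μ := by
    rw [integral_sub h1 h2, integral_sub hexpint (integrable_const _),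
      integral_const_mul, integral_sub hXint (integrable_const m)]
    simp [hm]
  rw [hInt, hvar]
  calc |∫ ω, (Real.exp (X ω) - Real.exp m - Real.exp m * (X ω - m)) ∂μ|
      ≤ ∫ ω, |Real.exp (X ω) - Real.exp m - Real.exp m * (X ω - m)| ∂μ :=
        by simpa [Real.norm_eq_abs] using
          norm_integral_le_integral_norm
            (fun ω => Real.exp (X ω) - Real.exp m - Real.exp m * (X ω - m))
    _ ≤ ∫ ω, Real.exp K / 2 * (X ω - m) ^ 2 ∂μ := by
        apply integral_mono_ae hgint.abs (hsqint.const_mul _)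
        filter_upwards [hbound] with ω h
        exact pointwise_bound h hmK
    _ = Real.exp K / 2 * ∫ ω, (X ω - m) ^ 2 ∂μ := integral_const_mul _ _
end

section
/- Let (Ω, μ) be a probability space and X : Ω → ℝ a measurable random variable with |X| ≤ K almost everywhere for some constant K > 0. Fix a real advantage A and a real clipping parameter ε > 0, and define the per-sample GRPO objective g : ℝ → ℝ by g(r) = min(r·A, clip(r, 1−ε, 1+ε)·A), where clip(r, a, b) = max(a, min(r, b)). Then the bias of the estimated GRPO loss satisfies |E[g(exp(X))] − g(exp(E[X]))| ≤ |A|·exp(K)·√(Var[X]) + (|A|·exp(K)/2)·Var[X]. -/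
open MeasureTheory ProbabilityTheory

/-- `clip r a b = max a (min r b)`. -/
def clip (r a b : ℝ) : ℝ := max a (min r b)

/-- The per-sample GRPO objective `g(r) = min (r·A) (clip(r, 1−ε, 1+ε)·A)`. -/
def grpoObjective (A ε r : ℝ) : ℝ := min (r * A) (clip r (1 - ε) (1 + ε) * A)

lemma clip_lipschitz (a b l u : ℝ) : |clip a l u - clip b l u| ≤ |a - b| := by
  unfold clip
  have h1 := abs_max_sub_max_le_max l (min a u) l (min b u)
  have h2 := abs_min_sub_min_le_max a u b u
  simp only [sub_self, abs_zero] at h1 h2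
  calc |max l (min a u) - max l (min b u)| ≤ max 0 |min a u - min b u| := h1
    _ ≤ |min a u - min b u| := max_le (abs_nonneg _) le_rfl
    _ ≤ max |a - b| 0 := h2
    _ = |a - b| := max_eq_left (abs_nonneg _)

lemma grpo_lipschitz (A ε a b : ℝ) :
    |grpoObjective A ε a - grpoObjective A ε b| ≤ |A| * |a - b| := by
  unfold grpoObjective
  calc |min (a * A) (clip a (1 - ε) (1 + ε) * A) -
        min (b * A) (clip b (1 - ε) (1 + ε) * A)|
      ≤ max |a * A - b * A|
          |clip a (1 - ε) (1 + ε) * A - clip b (1 - ε) (1 + ε) * A| :=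
        abs_min_sub_min_le_max _ _ _ _
    _ ≤ |A| * |a - b| := by
        apply max_le
        · rw [← sub_mul, abs_mul, mul_comm]
        · rw [← sub_mul, abs_mul, mul_comm]
          exact mul_le_mul_of_nonneg_left (clip_lipschitz a b _ _) (abs_nonneg A)

lemma exp_lipschitz_on (K x y : ℝ) (hx : |x| ≤ K) (hy : |y| ≤ K) :
    |Real.exp x - Real.exp y| ≤ Real.exp K * |x - y| := by
  wlog h : y ≤ x generalizing x y
  · rw [abs_sub_comm, abs_sub_comm x y]
    exact this y x hy hx (le_of_not_ge h)
  rw [abs_of_nonneg (sub_nonneg.2 (Real.exp_le_exp.2 h)), abs_of_nonneg (sub_nonneg.2 h)]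
  have hxK : x ≤ K := (abs_le.1 hx).2
  have key : Real.exp (x - y) - 1 ≤ (x - y) * Real.exp (x - y) := by
    have h1 := Real.add_one_le_exp (-(x - y))
    have h2 : Real.exp (-(x - y)) * Real.exp (x - y) = 1 := by
      rw [← Real.exp_add]; simp
    nlinarith [Real.exp_pos (x - y)]
  have : Real.exp x - Real.exp y = Real.exp y * (Real.exp (x - y) - 1) := by
    rw [mul_sub, ← Real.exp_add]; ring_nf
  rw [this]
  calc Real.exp y * (Real.exp (x - y) - 1)
      ≤ Real.exp y * ((x - y) * Real.exp (x - y)) :=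
        mul_le_mul_of_nonneg_left key (Real.exp_pos y).le
    _ = Real.exp x * (x - y) := by
        have hprod : Real.exp y * Real.exp (x - y) = Real.exp x := by
          rw [← Real.exp_add]; congr 1; ring
        rw [← hprod]; ring
    _ ≤ Real.exp K * (x - y) :=
        mul_le_mul_of_nonneg_right (Real.exp_le_exp.2 hxK) (sub_nonneg.2 h)

/-- **Per-sample bias bound of Theorem 3 (Bias and Variance Reduction in GRPO).**
If `X` is a measurable random variable on a probability space with `|X| ≤ K`
almost everywhere for some `K > 0`, then for the per-sample GRPO objective `g`
with advantage `A` and clipping parameter `ε > 0`,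
`|E[g(exp X)] − g(exp (E[X]))| ≤ |A|·exp K·√(Var[X]) + (|A|·exp K / 2)·Var[X]`. -/
theorem grpo_bias_le
    {Ω : Type*} [MeasurableSpace Ω] (μ : Measure Ω) [IsProbabilityMeasure μ]
    (X : Ω → ℝ) (hX : Measurable X)
    (K : ℝ) (hK : 0 < K) (hbound : ∀ᵐ ω ∂μ, |X ω| ≤ K)
    (A ε : ℝ) (hε : 0 < ε) :
    |(∫ ω, grpoObjective A ε (Real.exp (X ω)) ∂μ) -
        grpoObjective A ε (Real.exp (∫ ω, X ω ∂μ))| ≤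
      |A| * Real.exp K * Real.sqrt (variance X μ) +
        (|A| * Real.exp K / 2) * variance X μ := by
  set m : ℝ := ∫ ω, X ω ∂μ with hm
  -- integrability facts
  have hXint : Integrable X μ :=
    ⟨hX.aestronglyMeasurable, HasFiniteIntegral.of_bounded (C := K) hbound⟩
  have habsint : |m| ≤ ∫ ω, |X ω| ∂μ := by
    simpa [Real.norm_eq_abs] using norm_integral_le_integral_norm (μ := μ) X
  have hmK : |m| ≤ K := by
    calc |m| ≤ ∫ ω, |X ω| ∂μ := habsint
      _ ≤ ∫ _, K ∂μ := integral_mono_ae hXint.abs (integrable_const K) hbound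
      _ = K := by simp
  -- grpoObjective is continuous in r
  have hcont : Continuous (fun r => grpoObjective A ε r) := by
    unfold grpoObjective clip
    fun_prop
  have hGmeas : Measurable (fun ω => grpoObjective A ε (Real.exp (X ω))) :=
    hcont.measurable.comp (Real.measurable_exp.comp hX)
  have hGint : Integrable (fun ω => grpoObjective A ε (Real.exp (X ω))) μ := by
    refine ⟨hGmeas.aestronglyMeasurable, HasFiniteIntegral.of_bounded
      (C := |grpoObjective A ε (Real.exp m)| + |A| * Real.exp K * (2 * K)) ?_⟩
    filter_upwards [hbound] with ω hω
    have h1 := grpo_lipschitz A ε (Real.exp (X ω)) (Real.exp m)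
    have h2 := exp_lipschitz_on K (X ω) m hω hmK
    have h3 : |X ω - m| ≤ 2 * K := by
      have := abs_sub_abs_le_abs_sub (X ω) m
      calc |X ω - m| ≤ |X ω| + |m| := abs_sub _ _
        _ ≤ 2 * K := by linarith
    have h4 : |A| * |Real.exp (X ω) - Real.exp m| ≤ |A| * (Real.exp K * (2 * K)) := by
      apply mul_le_mul_of_nonneg_left _ (abs_nonneg A)
      calc |Real.exp (X ω) - Real.exp m| ≤ Real.exp K * |X ω - m| := h2
        _ ≤ Real.exp K * (2 * K) := mul_le_mul_of_nonneg_left h3 (Real.exp_pos K).le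
    have : |grpoObjective A ε (Real.exp (X ω))| ≤
        |grpoObjective A ε (Real.exp m)| + |A| * |Real.exp (X ω) - Real.exp m| := by
      have := abs_sub_abs_le_abs_sub (grpoObjective A ε (Real.exp (X ω)))
        (grpoObjective A ε (Real.exp m))
      linarith [h1]
    simp only [Real.norm_eq_abs]
    nlinarith [abs_nonneg A]
  -- the centered variable
  set Y : Ω → ℝ := fun ω => X ω - m with hY
  have hYmeas : Measurable Y := hX.sub measurable_const
  have hYbound : ∀ᵐ ω ∂μ, |Y ω| ≤ 2 * K := by
    filter_upwards [hbound] with ω hω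
    calc |Y ω| ≤ |X ω| + |m| := abs_sub _ _
      _ ≤ 2 * K := by linarith
  have hYint : Integrable Y μ := hXint.sub (integrable_const m)
  have hYabs : Integrable (fun ω => |Y ω|) μ := hYint.abs
  have hYsq : Integrable (fun ω => Y ω ^ 2) μ := by
    refine ⟨(hYmeas.pow_const 2).aestronglyMeasurable,
      HasFiniteIntegral.of_bounded (C := (2 * K) ^ 2) ?_⟩
    filter_upwards [hYbound] with ω hω
    simp only [Real.norm_eq_abs, abs_pow, sq_abs]
    calc Y ω ^ 2 = |Y ω| ^ 2 := (sq_abs _).symm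
      _ ≤ (2 * K) ^ 2 := by nlinarith [abs_nonneg (Y ω)]
  -- variance equals ∫ Y^2
  have hX2 : MemLp X 2 μ := by
    have htop : MemLp X ⊤ μ :=
      memLp_top_of_bound hX.aestronglyMeasurable K (by simpa using hbound)
    exact htop.mono_exponent le_top
  have hvar : variance X μ = ∫ ω, Y ω ^ 2 ∂μ := by
    rw [variance_eq_integral hX.aemeasurable]
  have hvar_nonneg : (0:ℝ) ≤ variance X μ := variance_nonneg X μ
  -- E|Y| ≤ sqrt(Var)
  have hEabs : ∫ ω, |Y ω| ∂μ ≤ Real.sqrt (variance X μ) := by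
    set c : ℝ := ∫ ω, |Y ω| ∂μ with hc
    have hc0 : 0 ≤ c := integral_nonneg fun ω => abs_nonneg _
    rw [Real.le_sqrt hc0 hvar_nonneg, hvar]
    have hexp : ∫ ω, (|Y ω| - c) ^ 2 ∂μ = (∫ ω, Y ω ^ 2 ∂μ) - c ^ 2 := by
      have : ∀ ω, (|Y ω| - c) ^ 2 = Y ω ^ 2 - 2 * c * |Y ω| + c ^ 2 := by
        intro ω; rw [sub_sq, sq_abs]; ring
      simp_rw [this]
      have hInt1 : Integrable (fun ω => Y ω ^ 2 - 2 * c * |Y ω|) μ :=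
        hYsq.sub (hYabs.const_mul (2 * c))
      rw [integral_add hInt1 (integrable_const _),
        integral_sub hYsq (hYabs.const_mul (2 * c)), integral_const_mul, integral_const]
      simp only [measure_univ, ENNReal.toReal_one, probReal_univ, smul_eq_mul, one_mul, ← hc]
      ring
    have hnn : 0 ≤ ∫ ω, (|Y ω| - c) ^ 2 ∂μ := integral_nonneg fun ω => sq_nonneg _
    linarith [hexp ▸ hnn]
  -- main bound
  have hmain : |(∫ ω, grpoObjective A ε (Real.exp (X ω)) ∂μ) -
      grpoObjective A ε (Real.exp m)| ≤ |A| * Real.exp K * Real.sqrt (variance X μ) := by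
    have heq : (∫ ω, grpoObjective A ε (Real.exp (X ω)) ∂μ) -
        grpoObjective A ε (Real.exp m) =
        ∫ ω, (grpoObjective A ε (Real.exp (X ω)) - grpoObjective A ε (Real.exp m)) ∂μ := by
      rw [integral_sub hGint (integrable_const _), integral_const]
      simp
    rw [heq]
    have hint : Integrable (fun ω => grpoObjective A ε (Real.exp (X ω)) -
        grpoObjective A ε (Real.exp m)) μ := hGint.sub (integrable_const _)
    calc |∫ ω, (grpoObjective A ε (Real.exp (X ω)) - grpoObjective A ε (Real.exp m)) ∂μ|
        ≤ ∫ ω, |grpoObjective A ε (Real.exp (X ω)) - grpoObjective A ε (Real.exp m)| ∂μ := by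
          simpa [Real.norm_eq_abs] using norm_integral_le_integral_norm (μ := μ)
            (fun ω => grpoObjective A ε (Real.exp (X ω)) - grpoObjective A ε (Real.exp m))
      _ ≤ ∫ ω, |A| * Real.exp K * |Y ω| ∂μ := by
          apply integral_mono_ae hint.abs (hYabs.const_mul _)
          filter_upwards [hbound] with ω hω
          calc |grpoObjective A ε (Real.exp (X ω)) - grpoObjective A ε (Real.exp m)|
              ≤ |A| * |Real.exp (X ω) - Real.exp m| := grpo_lipschitz A ε _ _
            _ ≤ |A| * (Real.exp K * |X ω - m|) :=
                mul_le_mul_of_nonneg_left (exp_lipschitz_on K (X ω) m hω hmK) (abs_nonneg A)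
            _ = |A| * Real.exp K * |Y ω| := by rw [hY]; ring
      _ = |A| * Real.exp K * ∫ ω, |Y ω| ∂μ := integral_const_mul _ _
      _ ≤ |A| * Real.exp K * Real.sqrt (variance X μ) := by
          apply mul_le_mul_of_nonneg_left hEabs
          positivity
  have hpos : 0 ≤ (|A| * Real.exp K / 2) * variance X μ := by positivity
  linarith [hmain]
end
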